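/- arXiv:1402.1870 — 5 statements merged into one kernel-verified Lean document; each statement's English description precedes it below -/
import Mathlib

section
/- For a simple connected graph G on n vertices with m edges and minimum degree δ, ξ_c(G) ≤ (2m - δ(n-1))·θ(G) + (δ - 1)·ξ^c(G), where θ(G) is the total eccentricity and ξ^c(G) = Σ_v deg(v)·ε(v) is the eccentric connectivity index. -/
open Finset

variable {V : Type*} [Fintype V] [DecidableEq V]

/-- Eccentricity of a vertex: the largest distance to any vertex. -/
noncomputable def eccent (G : SimpleGraph V) (v : V) : ℕ := univ.sup (G.dist v)

/-- `ndegSum G v` is `δ(v)`: the sum of degrees of the neighbors of `v`. -/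
def ndegSum (G : SimpleGraph V) [DecidableRel G.Adj] (v : V) : ℕ :=
  ∑ u ∈ G.neighborFinset v, G.degree u

/-- The modified eccentric connectivity index `ξ_c(G)`. -/
noncomputable def xiC (G : SimpleGraph V) [DecidableRel G.Adj] : ℕ :=
  ∑ v, ndegSum G v * eccent G v

/-- The eccentric connectivity index `ξ^c(G)`. -/
noncomputable def eccIndex (G : SimpleGraph V) [DecidableRel G.Adj] : ℕ :=
  ∑ v, G.degree v * eccent G v

/-- The first Zagreb index `M₁(G)`. -/
def M1 (G : SimpleGraph V) [DecidableRel G.Adj] : ℕ := ∑ v, G.degree v ^ 2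

noncomputable def minDeg (G : SimpleGraph V) [DecidableRel G.Adj] : ℕ := sInf (Set.range (fun v => G.degree v))

noncomputable def totalEcc (G : SimpleGraph V) : ℕ := ∑ v, eccent G v

lemma ndegSum_key (G : SimpleGraph V) [DecidableRel G.Adj] (v : V) :
    (ndegSum G v : ℤ) ≤ 2 * G.edgeFinset.card - G.degree v
      - ((Fintype.card V : ℤ) - 1 - G.degree v) * minDeg G := by
  classical
  set S : Finset V := insert v (G.neighborFinset v) with hS
  have hvS : v ∉ G.neighborFinset v := by simp
  have hcardS : S.card = 1 + G.degree v := by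
    rw [hS, Finset.card_insert_of_notMem hvS, G.card_neighborFinset_eq_degree]; omega
  have hSle : S.card ≤ Fintype.card V := by
    simpa using Finset.card_le_card (Finset.subset_univ S)
  have hsplit : ∑ u ∈ univ \ S, G.degree u + (G.degree v + ndegSum G v) = 2 * G.edgeFinset.card := by
    rw [← SimpleGraph.sum_degrees_eq_twice_card_edges]
    rw [← Finset.sum_sdiff (Finset.subset_univ S)]
    congr 1
    rw [hS, Finset.sum_insert hvS]; rfl
  have hlow : (univ \ S).card * minDeg G ≤ ∑ u ∈ univ \ S, G.degree u := by
    calc (univ \ S).card * minDeg G = ∑ _u ∈ univ \ S, minDeg G := by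
          rw [Finset.sum_const, smul_eq_mul]
      _ ≤ ∑ u ∈ univ \ S, G.degree u :=
          Finset.sum_le_sum fun u _ => Nat.sInf_le ⟨u, rfl⟩
  have hcardT : ((univ \ S).card : ℤ) = (Fintype.card V : ℤ) - 1 - G.degree v := by
    rw [Finset.card_sdiff_of_subset (Finset.subset_univ S)]
    simp only [Finset.card_univ]
    omega
  have h1 : ((∑ u ∈ univ \ S, G.degree u : ℕ) : ℤ) + (G.degree v + ndegSum G v) = 2 * G.edgeFinset.card := by
    exact_mod_cast congrArg (Nat.cast : ℕ → ℤ) hsplit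
  have h2 : ((Fintype.card V : ℤ) - 1 - G.degree v) * minDeg G ≤ (∑ u ∈ univ \ S, G.degree u : ℕ) := by
    rw [← hcardT]; exact_mod_cast hlow
  linarith

theorem xiC_upper_bound (G : SimpleGraph V) [DecidableRel G.Adj]
    (hG : G.Connected) :
    (xiC G : ℤ) ≤
      (2 * G.edgeFinset.card - minDeg G * (Fintype.card V - 1)) * totalEcc G +
        ((minDeg G : ℤ) - 1) * eccIndex G := by
  classical
  have : Nonempty V := hG.nonempty
  have hn : 1 ≤ Fintype.card V := Fintype.card_pos
  have hstep : (xiC G : ℤ) ≤ ∑ v, (2 * G.edgeFinset.card - G.degree v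
      - ((Fintype.card V : ℤ) - 1 - G.degree v) * minDeg G) * eccent G v := by
    rw [xiC]
    push_cast
    exact Finset.sum_le_sum fun v _ =>
      mul_le_mul_of_nonneg_right (ndegSum_key G v) (by positivity)
  refine hstep.trans_eq ?_
  rw [totalEcc, eccIndex]
  push_cast
  rw [Finset.mul_sum, Finset.mul_sum, ← Finset.sum_add_distrib]
  exact Finset.sum_congr rfl fun v _ => by ring
end

section
/- For a simple connected graph G on n vertices, ξ_c(G) ≤ n·M_1(G) - 2·M_2(G), where M_1 is the first Zagreb index and M_2(G) = Σ_{uv∈E} deg(u)·deg(v) is the second Zagreb index. -/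
open Finset

variable {V : Type*} [Fintype V] [DecidableEq V]

/-- The second Zagreb index `M₂(G)`. -/
def M2 (G : SimpleGraph V) [DecidableRel G.Adj] : ℕ :=
  ∑ e ∈ G.edgeFinset,
    Sym2.lift ⟨fun a b => G.degree a * G.degree b, fun a b => mul_comm _ _⟩ e

/-- There is a walk from `u` to `p.getVert k` of length at most `k`. -/
lemma exists_walk_getVert_left {G : SimpleGraph V} {u v : V} (p : G.Walk u v) (k : ℕ) :
    ∃ w : G.Walk u (p.getVert k), w.length ≤ k := by
  induction p generalizing k with
  | nil =>
    exact ⟨SimpleGraph.Walk.nil, by simp⟩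
  | @cons a b c h q ih =>
    cases k with
    | zero =>
      exact ⟨(SimpleGraph.Walk.nil).copy rfl (by simp), by simp⟩
    | succ k =>
      obtain ⟨w, hw⟩ := ih k
      refine ⟨(w.cons h).copy rfl (by rw [SimpleGraph.Walk.getVert_cons_succ]), ?_⟩
      simpa using Nat.succ_le_succ hw

/-- There is a walk from `p.getVert k` to `v` of length at most `p.length - k`. -/
lemma exists_walk_getVert_right {G : SimpleGraph V} {u v : V} (p : G.Walk u v) (k : ℕ) :
    ∃ w : G.Walk (p.getVert k) v, w.length ≤ p.length - k := by
  induction p generalizing k with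
  | nil =>
    exact ⟨SimpleGraph.Walk.nil, by simp⟩
  | @cons a b c h q ih =>
    cases k with
    | zero =>
      exact ⟨(q.cons h).copy (by simp) rfl, by simp⟩
    | succ k =>
      obtain ⟨w, hw⟩ := ih k
      refine ⟨w.copy (by rw [SimpleGraph.Walk.getVert_cons_succ]) rfl, ?_⟩
      simpa using hw

/-- In a connected graph, every value up to `dist u v` is attained as a distance from `u`. -/
lemma exists_dist_eq' {G : SimpleGraph V} (hG : G.Connected) (u v : V) {k : ℕ}
    (hk : k ≤ G.dist u v) : ∃ w, G.dist u w = k := by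
  obtain ⟨p, hp⟩ := hG.exists_walk_length_eq_dist u v
  refine ⟨p.getVert k, le_antisymm ?_ ?_⟩
  · obtain ⟨w, hw⟩ := exists_walk_getVert_left p k
    exact (SimpleGraph.dist_le w).trans hw
  · obtain ⟨w2, hw2⟩ := exists_walk_getVert_right p k
    have h1 : G.dist (p.getVert k) v ≤ p.length - k := (SimpleGraph.dist_le w2).trans hw2
    have h2 : G.dist u v ≤ G.dist u (p.getVert k) + G.dist (p.getVert k) v :=
      hG.dist_triangle
    omega

/-- The key counting bound: `deg(v) + ε(v) ≤ n`. -/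
lemma degree_add_eccent_le (G : SimpleGraph V) [DecidableRel G.Adj] (hG : G.Connected)
    (v : V) : G.degree v + eccent G v ≤ Fintype.card V := by
  have : Nonempty V := hG.nonempty
  set d := eccent G v with hd
  obtain ⟨u, -, hu⟩ := Finset.exists_mem_eq_sup univ univ_nonempty (G.dist v)
  have hchoice : ∀ k : ℕ, ∃ x, k ≤ d → G.dist v x = k := by
    intro k
    by_cases h : k ≤ d
    · obtain ⟨x, hx⟩ := exists_dist_eq' hG v u (k := k) (show k ≤ G.dist v u by rw [← hu]; exact h)
      exact ⟨x, fun _ => hx⟩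
    · exact ⟨v, fun hk => absurd hk h⟩
  choose g hg using hchoice
  have hgd : ∀ k ∈ Finset.Icc 2 d, G.dist v (g k) = k := fun k hk =>
    hg k (Finset.mem_Icc.mp hk).2
  set T := (Finset.Icc 2 d).image g with hT
  have hinj : Set.InjOn g (Finset.Icc 2 d : Finset ℕ) := by
    intro a ha b hb hab
    simp only [Finset.coe_Icc, Set.mem_Icc] at ha hb
    have h1 := hgd a (Finset.mem_Icc.mpr ha)
    have h2 := hgd b (Finset.mem_Icc.mpr hb)
    rw [← h1, ← h2, hab]
  have hcardT : T.card = d - 1 := by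
    rw [hT, Finset.card_image_of_injOn hinj, Nat.card_Icc]
    omega
  have hvT : v ∉ T := by
    intro hv
    obtain ⟨k, hk, hgk⟩ := Finset.mem_image.mp hv
    have := hgd k hk
    rw [hgk, SimpleGraph.dist_self] at this
    have := (Finset.mem_Icc.mp hk).1
    omega
  have hdisj : Disjoint (G.neighborFinset v) (insert v T) := by
    rw [Finset.disjoint_right]
    intro x hx hxN
    rw [SimpleGraph.mem_neighborFinset] at hxN
    rcases Finset.mem_insert.mp hx with rfl | hxT
    · exact G.irrefl hxN
    · obtain ⟨k, hk, rfl⟩ := Finset.mem_image.mp hxT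
      have h1 := hgd k hk
      have h2 : G.dist v (g k) = 1 := SimpleGraph.dist_eq_one_iff_adj.mpr hxN
      have := (Finset.mem_Icc.mp hk).1
      omega
  have hcard : (G.neighborFinset v ∪ insert v T).card ≤ Fintype.card V := by
    simpa using Finset.card_le_univ (G.neighborFinset v ∪ insert v T)
  rw [Finset.card_union_of_disjoint hdisj, Finset.card_insert_of_notMem hvT,
    hcardT, G.card_neighborFinset_eq_degree] at hcard
  omega

/-- `Σ_v δ(v) = M₁(G)`. -/
lemma sum_ndegSum (G : SimpleGraph V) [DecidableRel G.Adj] :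
    ∑ v, ndegSum G v = M1 G := by
  unfold ndegSum M1
  simp_rw [SimpleGraph.neighborFinset_eq_filter, Finset.sum_filter]
  rw [Finset.sum_comm]
  refine Finset.sum_congr rfl fun u _ => ?_
  have hfil : (Finset.univ.filter fun w => G.Adj w u) = G.neighborFinset u := by
    ext x
    simp [SimpleGraph.adj_comm]
  rw [← Finset.sum_filter, hfil, Finset.sum_const, G.card_neighborFinset_eq_degree,
    smul_eq_mul, sq]

/-- `Σ_v deg(v)·δ(v) = 2·M₂(G)`. -/
lemma sum_degree_mul_ndegSum (G : SimpleGraph V) [DecidableRel G.Adj] :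
    ∑ v, G.degree v * ndegSum G v = 2 * M2 G := by
  classical
  set F : Sym2 V → ℕ :=
    Sym2.lift ⟨fun a b => G.degree a * G.degree b, fun a b => mul_comm _ _⟩ with hF
  have step1 : ∑ d : G.Dart, F d.edge = 2 * M2 G := by
    rw [M2, Finset.mul_sum]
    rw [← Finset.sum_fiberwise_of_maps_to
      (g := fun d : G.Dart => d.edge) (t := G.edgeFinset)
      (fun d _ => by rw [SimpleGraph.mem_edgeFinset]; exact d.edge_mem)
      (fun d => F d.edge)]
    refine Finset.sum_congr rfl fun e he => ?_
    have hcard : #(Finset.univ.filter fun d : G.Dart => d.edge = e) = 2 :=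
      G.dart_edge_fiber_card e (SimpleGraph.mem_edgeFinset.mp he)
    calc ∑ d ∈ Finset.univ.filter (fun d : G.Dart => d.edge = e), F d.edge
        = ∑ d ∈ Finset.univ.filter (fun d : G.Dart => d.edge = e), F e := by
          refine Finset.sum_congr rfl fun d hd => ?_
          rw [(Finset.mem_filter.mp hd).2]
      _ = 2 * F e := by rw [Finset.sum_const, hcard, smul_eq_mul]
  have step2 : ∑ d : G.Dart, F d.edge =
      ∑ p ∈ Finset.univ.filter (fun p : V × V => G.Adj p.1 p.2),
        G.degree p.1 * G.degree p.2 := by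
    refine Finset.sum_bij' (fun (d : G.Dart) _ => (d.fst, d.snd))
      (fun p hp => (⟨p, (Finset.mem_filter.mp hp).2⟩ : G.Dart)) ?_ ?_ ?_ ?_ ?_
    · intro d _
      simp [d.adj]
    · intro p hp
      simp
    · intro d _
      rfl
    · intro p hp
      rfl
    · rintro ⟨⟨a, b⟩, hab⟩ _
      simp [hF, SimpleGraph.Dart.edge]
  have step3 : ∑ p ∈ Finset.univ.filter (fun p : V × V => G.Adj p.1 p.2),
      G.degree p.1 * G.degree p.2 = ∑ v, G.degree v * ndegSum G v := by
    rw [Finset.sum_filter, Fintype.sum_prod_type]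
    refine Finset.sum_congr rfl fun v _ => ?_
    rw [ndegSum, Finset.mul_sum, SimpleGraph.neighborFinset_eq_filter, Finset.sum_filter]
  omega

theorem xiC_le_nM1_sub_2M2 (G : SimpleGraph V) [DecidableRel G.Adj]
    (hG : G.Connected) :
    (xiC G : ℤ) ≤ Fintype.card V * M1 G - 2 * M2 G := by
  have h1 : ∀ v : V, (eccent G v : ℤ) ≤ (Fintype.card V : ℤ) - G.degree v := by
    intro v
    have := degree_add_eccent_le G hG v
    push_cast
    omega

  calc (xiC G : ℤ) = ∑ v, (ndegSum G v : ℤ) * (eccent G v : ℤ) := by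
        rw [xiC]; push_cast; rfl
    _ ≤ ∑ v, (ndegSum G v : ℤ) * ((Fintype.card V : ℤ) - G.degree v) := by
        refine Finset.sum_le_sum fun v _ => ?_
        exact mul_le_mul_of_nonneg_left (h1 v) (by positivity)
    _ = (Fintype.card V : ℤ) * (∑ v, (ndegSum G v : ℤ))
        - ∑ v, (G.degree v : ℤ) * (ndegSum G v : ℤ) := by
        rw [Finset.mul_sum, ← Finset.sum_sub_distrib]
        exact Finset.sum_congr rfl fun v _ => by ring
    _ = Fintype.card V * M1 G - 2 * M2 G := by
        rw [show (∑ v, (ndegSum G v : ℤ)) = ((∑ v, ndegSum G v : ℕ) : ℤ) by push_cast; rfl,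
          show (∑ v, (G.degree v : ℤ) * (ndegSum G v : ℤ))
            = ((∑ v, G.degree v * ndegSum G v : ℕ) : ℤ) by push_cast; rfl,
          sum_ndegSum G, sum_degree_mul_ndegSum G]
        push_cast
        ring
end

section
/- For any vertex v of a simple connected graph G on n vertices, the eccentricity satisfies ε(v) ≤ n - deg(v). -/
open Finset

variable {V : Type*} [Fintype V] [DecidableEq V]

private lemma dist_getVert_le {G : SimpleGraph V} (hG : G.Connected) :
    ∀ {a b : V} (p : G.Walk a b) (i : ℕ), G.dist a (p.getVert i) ≤ i := by
  intro a b p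
  induction p with
  | nil => intro i; simp [SimpleGraph.Walk.getVert, SimpleGraph.dist_self]
  | cons h q ih =>
    intro i
    cases i with
    | zero => simp
    | succ i =>
      calc G.dist _ _ ≤ G.dist _ _ + G.dist _ _ := hG.dist_triangle
        _ ≤ 1 + i := by
            gcongr
            · exact le_trans (G.dist_le h.toWalk) (by simp)
            · exact ih i
        _ = i + 1 := by omega

private lemma getVert_dist_le {G : SimpleGraph V} :
    ∀ {a b : V} (p : G.Walk a b) (i : ℕ), G.dist (p.getVert i) b ≤ p.length - i := by
  intro a b p
  induction p with
  | nil => intro i; simp [SimpleGraph.Walk.getVert, SimpleGraph.dist_self]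
  | cons h q ih =>
    intro i
    cases i with
    | zero =>
      simpa using le_trans (G.dist_le (SimpleGraph.Walk.cons h q)) (by simp)
    | succ i =>
      simpa using (ih i)

theorem eccent_le_card_sub_degree (G : SimpleGraph V) [DecidableRel G.Adj]
    (hG : G.Connected) (v : V) :
    eccent G v ≤ Fintype.card V - G.degree v := by
  classical
  have hne : (univ : Finset V).Nonempty := by
    have : Nonempty V := hG.nonempty
    exact univ_nonempty
  obtain ⟨u, -, hu⟩ := Finset.exists_mem_eq_sup univ hne (G.dist v)
  set d := eccent G v with hd
  have hdu : G.dist v u = d := hu.symm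
  obtain ⟨p, hp⟩ := (hG v u).exists_walk_length_eq_dist
  have hkey : ∀ i ≤ d, G.dist v (p.getVert i) = i := by
    intro i hi
    refine le_antisymm (dist_getVert_le hG p i) ?_
    have h2 : G.dist (p.getVert i) u ≤ d - i := by
      have := getVert_dist_le p i
      rwa [hp, hdu] at this
    have h3 : d ≤ G.dist v (p.getVert i) + (d - i) := by
      calc d = G.dist v u := hdu.symm
        _ ≤ G.dist v (p.getVert i) + G.dist (p.getVert i) u := hG.dist_triangle
        _ ≤ _ := by gcongr
    omega
  set T : Finset V := (Finset.range (d + 1)).image p.getVert with hT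
  have hTcard : T.card = d + 1 := by
    rw [hT, Finset.card_image_of_injOn, Finset.card_range]
    intro i hi j hj hij
    simp only [Finset.coe_range, Set.mem_Iio] at hi hj
    have h1 := hkey i (by omega)
    have h2 := hkey j (by omega)
    rw [hij] at h1
    omega
  set A := G.neighborFinset v with hA
  have hinter : T ∩ A ⊆ {p.getVert 1} := by
    intro x hx
    simp only [Finset.mem_inter, hT, Finset.mem_image, Finset.mem_range, hA,
      SimpleGraph.mem_neighborFinset] at hx
    obtain ⟨⟨i, hi, rfl⟩, hadj⟩ := hx
    have h1 := hkey i (by omega)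
    have h2 : G.dist v (p.getVert i) = 1 := SimpleGraph.dist_eq_one_iff_adj.mpr hadj
    have : i = 1 := by omega
    simp [this]
  have hic : (T ∩ A).card ≤ 1 := by
    simpa using Finset.card_le_card hinter
  have hu2 : (T ∪ A).card ≤ Fintype.card V := by
    simpa using Finset.card_le_card (Finset.subset_univ (T ∪ A))
  have := Finset.card_union_add_card_inter T A
  have hdeg : A.card = G.degree v := G.card_neighborFinset_eq_degree v
  omega
end

section
/- For a simple connected graph G on n ≥ 2 vertices, ξ_c(G) ≥ 2·M_2(G)/(n-1), where M_2(G) = Σ_{uv∈E} deg(u)·deg(v), with equality if and only if G ≅ K_n. -/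
open Finset

variable {V : Type*} [Fintype V] [DecidableEq V]

private def dartSigma (G : SimpleGraph V) : G.Dart ≃ Σ v : V, G.neighborSet v where
  toFun d := ⟨d.fst, d.snd, d.adj⟩
  invFun p := ⟨(p.1, p.2.1), p.2.2⟩
  left_inv d := rfl
  right_inv p := rfl

private lemma sum_darts_fiber (G : SimpleGraph V) [DecidableRel G.Adj]
    (f : V → V → ℕ) :
    ∑ d : G.Dart, f d.fst d.snd = ∑ v, ∑ u ∈ G.neighborFinset v, f v u := by
  calc ∑ d : G.Dart, f d.fst d.snd
      = ∑ p : Σ v : V, G.neighborSet v, f p.1 p.2.1 :=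
        Fintype.sum_equiv (dartSigma G) _ _ (fun d => rfl)
    _ = ∑ v, ∑ u ∈ G.neighborFinset v, f v u := by
        rw [← Finset.univ_sigma_univ, Finset.sum_sigma]
        refine Finset.sum_congr rfl fun v _ => ?_
        rw [SimpleGraph.neighborFinset_def, ← Finset.sum_set_coe]

private lemma sum_darts_edge (G : SimpleGraph V) [DecidableRel G.Adj]
    (f : V → V → ℕ) (hf : ∀ a b, f a b = f b a) :
    ∑ d : G.Dart, f d.fst d.snd = 2 * ∑ e ∈ G.edgeFinset, Sym2.lift ⟨f, hf⟩ e := by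
  have himg : (univ : Finset G.Dart).image SimpleGraph.Dart.edge = G.edgeFinset := by
    ext e
    simp only [Finset.mem_image, Finset.mem_univ, true_and, SimpleGraph.mem_edgeFinset]
    constructor
    · rintro ⟨d, rfl⟩; exact d.edge_mem
    · refine Sym2.ind (fun a b he => ?_) e
      exact ⟨⟨(a, b), (SimpleGraph.mem_edgeSet G).1 he⟩, rfl⟩
  have hlift : ∀ d : G.Dart, f d.fst d.snd = Sym2.lift ⟨f, hf⟩ d.edge := fun d => rfl
  calc ∑ d : G.Dart, f d.fst d.snd
      = ∑ d : G.Dart, Sym2.lift ⟨f, hf⟩ d.edge := by simp only [hlift]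
    _ = ∑ e ∈ (univ : Finset G.Dart).image SimpleGraph.Dart.edge,
          #{d : G.Dart | d.edge = e} • Sym2.lift ⟨f, hf⟩ e := Finset.sum_comp _ _
    _ = 2 * ∑ e ∈ G.edgeFinset, Sym2.lift ⟨f, hf⟩ e := by
        rw [himg, Finset.mul_sum]
        refine Finset.sum_congr rfl fun e he => ?_
        have h2 := G.dart_edge_fiber_card e (SimpleGraph.mem_edgeFinset.1 he)
        rw [smul_eq_mul, h2]
    
private lemma two_M2_eq (G : SimpleGraph V) [DecidableRel G.Adj] :
    2 * M2 G = ∑ v, ndegSum G v * G.degree v := by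
  rw [M2, ← sum_darts_edge G _ (fun a b => mul_comm _ _),
    sum_darts_fiber G (fun a b => G.degree a * G.degree b)]
  refine Finset.sum_congr rfl fun v _ => ?_
  rw [ndegSum, Finset.sum_mul]
  exact Finset.sum_congr rfl fun u _ => mul_comm _ _

theorem two_M2_le_xiC (G : SimpleGraph V) [DecidableRel G.Adj]
    (hG : G.Connected) (hn : 2 ≤ Fintype.card V) :
    2 * M2 G ≤ (Fintype.card V - 1) * xiC G ∧
      ((Fintype.card V - 1) * xiC G = 2 * M2 G ↔ G = ⊤) := by
  set n := Fintype.card V with hnn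
  have hadj : ∀ v : V, ∃ u, G.Adj v u := by
    intro v
    obtain ⟨w, hw⟩ := Fintype.exists_ne_of_one_lt_card (by omega) v
    obtain ⟨p⟩ := hG.preconnected v w
    cases p with
    | nil => exact absurd rfl hw
    | cons h _ => exact ⟨_, h⟩
  have hdeg1 : ∀ v, 1 ≤ G.degree v := fun v =>
    (G.degree_pos_iff_exists_adj v).2 (hadj v)
  have hdelta1 : ∀ v, 1 ≤ ndegSum G v := by
    intro v
    obtain ⟨u, hu⟩ := hadj v
    calc 1 ≤ G.degree u := hdeg1 u
      _ ≤ ndegSum G v :=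
        Finset.single_le_sum (f := fun u => G.degree u) (fun i _ => Nat.zero_le _)
          ((SimpleGraph.mem_neighborFinset G v u).2 hu)
  have hecc1 : ∀ v, 1 ≤ eccent G v := by
    intro v
    obtain ⟨w, hw⟩ := Fintype.exists_ne_of_one_lt_card (by omega) v
    calc 1 ≤ G.dist v w := hG.pos_dist_of_ne (Ne.symm hw)
      _ ≤ eccent G v := Finset.le_sup (Finset.mem_univ w)
  have hdegle : ∀ v, G.degree v ≤ n - 1 := fun v =>
    Nat.le_sub_one_of_lt (G.degree_lt_card_verts v)
  have key : ∀ v, ndegSum G v * G.degree v ≤ (n - 1) * (ndegSum G v * eccent G v) := by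
    intro v
    calc ndegSum G v * G.degree v ≤ ndegSum G v * (n - 1) :=
          Nat.mul_le_mul_left _ (hdegle v)
      _ ≤ ndegSum G v * ((n - 1) * eccent G v) :=
          Nat.mul_le_mul_left _ (Nat.le_mul_of_pos_right _ (hecc1 v))
      _ = (n - 1) * (ndegSum G v * eccent G v) := by ring
  have hxi : (n - 1) * xiC G = ∑ v, (n - 1) * (ndegSum G v * eccent G v) := by
    rw [xiC, Finset.mul_sum]
  constructor
  · rw [two_M2_eq, hxi]
    exact Finset.sum_le_sum fun v _ => key v
  constructor
  · intro h
    have hsum : (∑ v, ndegSum G v * G.degree v)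
        = ∑ v, (n - 1) * (ndegSum G v * eccent G v) := by
      rw [← two_M2_eq, ← hxi, h]
    have hterm := (Finset.sum_eq_sum_iff_of_le (fun v _ => key v)).1 hsum
    have hdeg : ∀ v, G.degree v = n - 1 := by
      intro v
      have hv := hterm v (Finset.mem_univ v)
      have hv' : ndegSum G v * G.degree v = ndegSum G v * ((n - 1) * eccent G v) := by
        rw [hv]; ring
      have h2 : G.degree v = (n - 1) * eccent G v :=
        Nat.eq_of_mul_eq_mul_left (hdelta1 v) hv'
      have h3 : n - 1 ≤ (n - 1) * eccent G v := Nat.le_mul_of_pos_right _ (hecc1 v)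
      have := hdegle v
      omega
    ext v u
    simp only [SimpleGraph.top_adj]
    constructor
    · exact fun h' => h'.ne
    · intro hne
      have hsub : G.neighborFinset v ⊆ univ.erase v := by
        intro x hx
        exact Finset.mem_erase.2
          ⟨(G.ne_of_adj ((SimpleGraph.mem_neighborFinset G v x).1 hx)).symm, Finset.mem_univ x⟩
      have hcard : (univ.erase v).card ≤ (G.neighborFinset v).card := by
        rw [Finset.card_erase_of_mem (Finset.mem_univ v), Finset.card_univ,
          SimpleGraph.card_neighborFinset_eq_degree, hdeg v]
      have heq := Finset.eq_of_subset_of_card_le hsub hcard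
      have : u ∈ G.neighborFinset v := by
        rw [heq]
        exact Finset.mem_erase.2 ⟨Ne.symm hne, Finset.mem_univ u⟩
      exact (SimpleGraph.mem_neighborFinset G v u).1 this
  · intro h
    have hA : ∀ v u : V, G.Adj v u ↔ u ≠ v := by
      intro v u
      rw [h]
      simp [SimpleGraph.top_adj, ne_comm]
    have hNF : ∀ v, G.neighborFinset v = univ.erase v := by
      intro v
      ext u
      simp [SimpleGraph.mem_neighborFinset, hA, Finset.mem_erase]
    have hdeg : ∀ v, G.degree v = n - 1 := by
      intro v
      rw [← SimpleGraph.card_neighborFinset_eq_degree, hNF,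
        Finset.card_erase_of_mem (Finset.mem_univ v), Finset.card_univ]
    have hecc : ∀ v, eccent G v = 1 := by
      intro v
      refine le_antisymm (Finset.sup_le fun u _ => ?_) (hecc1 v)
      rcases eq_or_ne u v with rfl | hne
      · simp [SimpleGraph.dist_self]
      · exact le_of_eq (SimpleGraph.dist_eq_one_iff_adj.2 ((hA v u).2 hne))
    rw [two_M2_eq, hxi]
    refine Finset.sum_congr rfl fun v _ => ?_
    rw [hdeg v, hecc v]
    ring
end

section
/- For a simple connected graph G on n ≥ 2 vertices with minimum degree δ, ξ_c(G) ≥ (2·δ^2/(n-1))·W(G), where W(G) = (1/2)·Σ_{v∈V} D(v) is the Wiener index and D(v) = Σ_{u∈V} d(v,u), with equality if and only if G ≅ K_n. -/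
open Finset

variable {V : Type*} [Fintype V] [DecidableEq V]

/-- `distSum G v = D(v)`, the sum of distances from `v` to all vertices. -/
noncomputable def distSum (G : SimpleGraph V) (v : V) : ℕ := ∑ u, G.dist v u

/-- Twice the Wiener index `2·W(G) = Σ_v D(v)`. -/
noncomputable def twoWiener (G : SimpleGraph V) : ℕ := ∑ v, distSum G v

/-!
Termwise, `δ² · D(v) ≤ δ(v) · (n - 1) · ε(v)`: every neighbour of `v` has degree at least `δ`,
and every vertex other than `v` is at distance at most `ε(v)` from it. Summing over `v` gives the
bound. In case of equality, `δ(v) > 0` (by connectivity) forces all distances from `v` to other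
vertices to equal `ε(v)`; a neighbour of `v` shows `ε(v) = 1`, so `v` is adjacent to every other
vertex. Conversely, in `K_n` every one of these inequalities is an equality.
-/

section

variable (G : SimpleGraph V) [DecidableRel G.Adj]

omit [DecidableEq V] in
lemma minDeg_eq_minDegree : minDeg G = G.minDegree := by
  rcases isEmpty_or_nonempty V with hV | hV
  · rw [G.minDegree_of_subsingleton, minDeg, Set.range_eq_empty, Nat.sInf_empty]
  · refine le_antisymm
      (G.le_minDegree_of_forall_le_degree _ fun w => Nat.sInf_le (Set.mem_range_self w)) ?_
    obtain ⟨w, hw⟩ := Nat.sInf_mem (Set.range_nonempty fun v => G.degree v)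
    rw [minDeg, ← hw]
    exact G.minDegree_le_degree w

omit [DecidableEq V] in
lemma minDeg_sq_le_ndegSum (v : V) : minDeg G ^ 2 ≤ ndegSum G v := by
  have h : G.degree v * G.minDegree ≤ ndegSum G v := by
    rw [← G.card_neighborFinset_eq_degree, ← smul_eq_mul]
    exact card_nsmul_le_sum _ _ _ fun u _ => G.minDegree_le_degree u
  rw [minDeg_eq_minDegree, sq]
  exact (Nat.mul_le_mul_right _ (G.minDegree_le_degree v)).trans h

omit [DecidableEq V] in
lemma ndegSum_pos_of_adj {v w : V} (h : G.Adj v w) : 0 < ndegSum G v :=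
  calc 0 < G.degree w := G.degree_pos_iff_exists_adj w |>.2 ⟨v, h.symm⟩
    _ ≤ ndegSum G v := by
      rw [ndegSum]
      exact Finset.single_le_sum (f := fun u => G.degree u) (fun _ _ => Nat.zero_le _)
        (G.mem_neighborFinset v w |>.2 h)

end

section

variable (G : SimpleGraph V)

omit [DecidableEq V] in
lemma dist_le_eccent (v u : V) : G.dist v u ≤ eccent G v := le_sup (mem_univ u)

lemma distSum_eq_sum_erase (v : V) : distSum G v = ∑ u ∈ univ.erase v, G.dist v u := by
  rw [distSum, ← sum_erase_add univ _ (mem_univ v), SimpleGraph.dist_self, add_zero]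

lemma distSum_le_mul_eccent (v : V) : distSum G v ≤ (Fintype.card V - 1) * eccent G v := by
  rw [distSum_eq_sum_erase, ← card_univ, ← card_erase_of_mem (mem_univ v), ← smul_eq_mul]
  exact sum_le_card_nsmul _ _ _ fun u _ => dist_le_eccent G v u

lemma distSum_eq_mul_eccent_iff (v : V) :
    distSum G v = (Fintype.card V - 1) * eccent G v ↔ ∀ u ≠ v, G.dist v u = eccent G v := by
  rw [distSum_eq_sum_erase, ← card_univ, ← card_erase_of_mem (mem_univ v), ← smul_eq_mul,
    ← sum_const, sum_eq_sum_iff_of_le fun u _ => dist_le_eccent G v u]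
  simp

end

lemma eccent_top [Nontrivial V] (v : V) : eccent (⊤ : SimpleGraph V) v = 1 := by
  obtain ⟨u, huv⟩ := exists_ne v
  refine le_antisymm (Finset.sup_le fun w _ => ?_) ?_
  · rw [SimpleGraph.dist_top]
    split_ifs <;> simp
  · exact (SimpleGraph.dist_top_of_ne huv.symm).symm.le.trans (dist_le_eccent _ v u)

lemma distSum_top (v : V) :
    distSum (⊤ : SimpleGraph V) v = (Fintype.card V - 1) * eccent (⊤ : SimpleGraph V) v := by
  refine (distSum_eq_mul_eccent_iff _ v).2 fun u huv => ?_
  have : Nontrivial V := ⟨⟨u, v, huv⟩⟩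
  rw [eccent_top, SimpleGraph.dist_top_of_ne huv.symm]

lemma ndegSum_top (v : V) : ndegSum (⊤ : SimpleGraph V) v = (Fintype.card V - 1) ^ 2 := by
  rw [ndegSum, sum_congr rfl fun u _ => SimpleGraph.IsRegularOfDegree.top u, sum_const,
    SimpleGraph.card_neighborFinset_eq_degree, SimpleGraph.IsRegularOfDegree.top v, smul_eq_mul, sq]

section

variable (G : SimpleGraph V) [DecidableRel G.Adj]

lemma minDeg_sq_mul_distSum_le (v : V) :
    minDeg G ^ 2 * distSum G v ≤ (Fintype.card V - 1) * (ndegSum G v * eccent G v) :=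
  calc minDeg G ^ 2 * distSum G v ≤ ndegSum G v * ((Fintype.card V - 1) * eccent G v) :=
        Nat.mul_le_mul (minDeg_sq_le_ndegSum G v) (distSum_le_mul_eccent G v)
    _ = (Fintype.card V - 1) * (ndegSum G v * eccent G v) := by ring

lemma minDeg_sq_mul_twoWiener_le : minDeg G ^ 2 * twoWiener G ≤ (Fintype.card V - 1) * xiC G := by
  rw [twoWiener, xiC, mul_sum, mul_sum]
  exact sum_le_sum fun v _ => minDeg_sq_mul_distSum_le G v

lemma mul_xiC_eq_iff :
    (Fintype.card V - 1) * xiC G = minDeg G ^ 2 * twoWiener G ↔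
      ∀ v, minDeg G ^ 2 * distSum G v = (Fintype.card V - 1) * (ndegSum G v * eccent G v) := by
  rw [twoWiener, xiC, mul_sum, mul_sum, eq_comm,
    sum_eq_sum_iff_of_le fun v _ => minDeg_sq_mul_distSum_le G v]
  simp

lemma eq_top_of_forall_mul_eq (hG : G.Connected)
    (h : ∀ v, minDeg G ^ 2 * distSum G v = (Fintype.card V - 1) * (ndegSum G v * eccent G v)) :
    G = ⊤ := by
  ext v u
  refine ⟨SimpleGraph.Adj.ne, fun huv => ?_⟩
  have : Nontrivial V := ⟨⟨v, u, huv⟩⟩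
  obtain ⟨w, hw⟩ := hG.preconnected.exists_adj_of_nontrivial v
  -- `δ(v) > 0`, so equality in `δ² · D(v) ≤ δ(v) · D(v) ≤ δ(v) · (n - 1) · ε(v)` forces
  -- equality in the second step
  have hD : distSum G v = (Fintype.card V - 1) * eccent G v := by
    refine le_antisymm (distSum_le_mul_eccent G v)
      (Nat.le_of_mul_le_mul_left ?_ (ndegSum_pos_of_adj G hw))
    calc ndegSum G v * ((Fintype.card V - 1) * eccent G v)
        = minDeg G ^ 2 * distSum G v := by rw [h v]; ring
      _ ≤ ndegSum G v * distSum G v := Nat.mul_le_mul_right _ (minDeg_sq_le_ndegSum G v)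
  have hdist := (distSum_eq_mul_eccent_iff G v).1 hD
  rw [← SimpleGraph.dist_eq_one_iff_adj, hdist u (Ne.symm huv), ← hdist w hw.ne',
    SimpleGraph.dist_eq_one_iff_adj]
  exact hw

end

lemma minDeg_sq_mul_distSum_top (v : V) :
    minDeg (⊤ : SimpleGraph V) ^ 2 * distSum (⊤ : SimpleGraph V) v =
      (Fintype.card V - 1) *
        (ndegSum (⊤ : SimpleGraph V) v * eccent (⊤ : SimpleGraph V) v) := by
  rw [minDeg_eq_minDegree, SimpleGraph.minDegree_top, ndegSum_top, distSum_top]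
  ring

theorem wiener_lower_bound_general (G : SimpleGraph V) [DecidableRel G.Adj]
    (hG : G.Connected) :
    minDeg G ^ 2 * twoWiener G ≤ (Fintype.card V - 1) * xiC G ∧
      ((Fintype.card V - 1) * xiC G = minDeg G ^ 2 * twoWiener G ↔ G = ⊤) := by
  refine ⟨minDeg_sq_mul_twoWiener_le G,
    (mul_xiC_eq_iff G).trans ⟨eq_top_of_forall_mul_eq G hG, ?_⟩⟩
  rintro rfl
  convert minDeg_sq_mul_distSum_top (V := V)

theorem wiener_lower_bound (G : SimpleGraph V) [DecidableRel G.Adj]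
    (hG : G.Connected) (hn : 2 ≤ Fintype.card V) :
    minDeg G ^ 2 * twoWiener G ≤ (Fintype.card V - 1) * xiC G ∧
      ((Fintype.card V - 1) * xiC G = minDeg G ^ 2 * twoWiener G ↔ G = ⊤) :=
  wiener_lower_bound_general G hG
end
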